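/- arXiv:2101.10830 — 3 statements merged into one kernel-verified Lean document; each statement's English description precedes it below -/
import Mathlib

section
/- Let Γ be a finite directed acyclic graph on vertices {1,…,N} such that every edge goes from a larger vertex to a smaller vertex, and such that whenever there is an edge i → j and j < l < i, there is also an edge i → l. Let p_{ij} denote the number of directed paths from vertex i to vertex j (with p_{ii} = 1 and p_{ij} = 0 for i < j), and write p_i = p_{Ni}. Suppose the vertices connected to vertex 1 by an edge are exactly 2,…,k (with 2 ≤ k ≤ N). Then (p_2 + ⋯ + p_k)·(p_{k+1} + ⋯ + p_N + 1) ≥ p_2² + p_3² + ⋯ + p_N². -/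
/-!
Interval property plus out-degree at most two force every edge into `j ≥ 2` to start at `j + 1`
or `j + 2`; in particular `k ≤ 3`. Splitting paths from `N` by their last edge, `p_j` is
therefore non-increasing with `p_j ≤ p_{j+1} + p_{j+2}` for `2 ≤ j < N`. Writing
`T_a = p_a + ⋯ + p_N`, downward induction on `j` gives `p_j ≤ T_{j+2} + 1` and then
`p_j² + ⋯ + p_N² ≤ p_j (T_{j+1} + 1)`, whose inductive step is
`(p_j - p_{j+1}) (T_{j+2} + 1 - p_j) ≥ 0`. At `j = 2` this is the case `k = 2`; for `k = 3`
add `p_3` times the first bound `p_2 ≤ T_4 + 1`.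
-/

/-- The number of directed paths from vertex `i` to vertex `j` in the directed
graph on natural numbers with edge relation `E` (all edges go from a larger
vertex to a smaller vertex); `pathCount E i i = 1`. -/
def pathCount (E : ℕ → ℕ → Bool) : ℕ → ℕ → ℕ
  | i, j =>
    if i = j then 1
    else ∑ l ∈ (Finset.range i).attach, if E i l.1 then pathCount E l.1 j else 0
termination_by i _ => i
decreasing_by exact Finset.mem_range.mp l.2

open Finset

section pathCount

variable (E : ℕ → ℕ → Bool)

theorem pathCount_self (i : ℕ) : pathCount E i i = 1 := by
  rw [pathCount, if_pos rfl]

theorem pathCount_eq_sum_range {i j : ℕ} (h : i ≠ j) :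
    pathCount E i j = ∑ l ∈ (range i).filter (fun l => E i l), pathCount E l j := by
  rw [pathCount, if_neg h, sum_attach (range i) fun l => if E i l then pathCount E l j else 0,
    sum_filter]

theorem pathCount_eq_zero_of_lt {i j : ℕ} (h : i < j) : pathCount E i j = 0 := by
  induction i using Nat.strong_induction_on with
  | _ i ih =>
    rw [pathCount_eq_sum_range E h.ne]
    refine sum_eq_zero fun l hl => ih l ?_ ?_ <;> simp only [mem_filter, mem_range] at hl <;> omega

theorem pathCount_eq_sum_Ico {i j : ℕ} (h : j < i) :
    pathCount E i j = ∑ l ∈ (Ico j i).filter (fun l => E i l), pathCount E l j := by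
  rw [pathCount_eq_sum_range E h.ne']
  refine (sum_subset (filter_subset_filter _ fun l hl => mem_range.2 (mem_Ico.1 hl).2)
    fun l hl hl' => ?_).symm
  simp only [mem_filter, mem_range, mem_Ico] at hl hl'
  exact pathCount_eq_zero_of_lt E (by grind)

/-- Paths split by their last edge, where the definition splits them by their first. -/
theorem pathCount_eq_sum_Ioc {m j : ℕ} (h : j < m) :
    pathCount E m j = ∑ i ∈ (Ioc j m).filter (fun i => E i j), pathCount E m i := by
  induction m using Nat.strong_induction_on with
  | _ m ih =>
    have inner : ∑ l ∈ (Ioo j m).filter (fun l => E m l), pathCount E l j =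
        ∑ i ∈ (Ioo j m).filter (fun i => E i j), pathCount E m i := calc
      _ = ∑ l ∈ (Ioo j m).filter (fun l => E m l),
            ∑ i ∈ (Ioc j l).filter (fun i => E i j), pathCount E l i :=
        sum_congr rfl fun l hl => by simp only [mem_filter, mem_Ioo] at hl; exact ih l hl.1.2 hl.1.1
      _ = ∑ i ∈ (Ioo j m).filter (fun i => E i j),
            ∑ l ∈ (Ico i m).filter (fun l => E m l), pathCount E l i :=
        sum_comm' fun l i => by simp only [mem_filter, mem_Ioo, mem_Ioc, mem_Ico]; grind
      _ = _ := sum_congr rfl fun i hi => by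
        simp only [mem_filter, mem_Ioo] at hi; exact (pathCount_eq_sum_Ico E hi.1.2).symm
    rw [pathCount_eq_sum_Ico E h, ← Ioo_insert_left h, ← Ioo_insert_right h, filter_insert,
      filter_insert]
    split_ifs <;> simp [sum_insert, pathCount_self, inner]

end pathCount

theorem le_add_of_card_filter_le {E : ℕ → ℕ → Bool} {i j d : ℕ} (hE : E i j = true)
    (hInt : ∀ l, j < l → l < i → E i l = true)
    (hcard : ((range i).filter (fun l => E i l = true)).card ≤ d) : i ≤ j + d := by
  have hsub : Ico j i ⊆ (range i).filter (fun l => E i l = true) := fun l hl => by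
    simp only [mem_Ico, mem_filter, mem_range] at hl ⊢
    rcases hl.1.eq_or_lt with rfl | hjl
    · exact ⟨hl.2, hE⟩
    · exact ⟨hl.2, hInt l hjl hl.2⟩
  have := (card_le_card hsub).trans hcard
  rw [Nat.card_Ico] at this
  omega

theorem pathCount_succ_le {E : ℕ → ℕ → Bool} {m j : ℕ} (hE : E (j + 1) j = true)
    (hj : j < m) : pathCount E m (j + 1) ≤ pathCount E m j := by
  rw [pathCount_eq_sum_Ioc E hj]
  refine single_le_sum (fun _ _ => Nat.zero_le _) ?_
  simp only [mem_filter, mem_Ioc, hE, and_true]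
  omega

theorem pathCount_le_add {E : ℕ → ℕ → Bool} {m j : ℕ} (hj : j < m)
    (hdeg : ∀ i, j < i → i ≤ m → E i j = true → i ≤ j + 2) :
    pathCount E m j ≤ pathCount E m (j + 1) + pathCount E m (j + 2) := by
  rw [pathCount_eq_sum_Ioc E hj, ← sum_pair (f := pathCount E m) (by omega : j + 1 ≠ j + 2)]
  refine sum_le_sum_of_subset fun i hi => ?_
  simp only [mem_filter, mem_Ioc, mem_insert, mem_singleton] at hi ⊢
  have := hdeg i hi.1.1 hi.1.2 hi.2
  omega

section TailSums

variable {p : ℕ → ℕ} {N : ℕ}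

theorem sum_Icc_eq_add_sum_Icc_add_one {M : Type*} [AddCommMonoid M] {f : ℕ → M}
    (hf : ∀ i, N < i → f i = 0) (a : ℕ) :
    ∑ i ∈ Icc a N, f i = f a + ∑ i ∈ Icc (a + 1) N, f i := by
  rcases le_or_gt a N with ha | ha
  · rw [Icc_add_one_left_eq_Ioc, add_sum_Ioc_eq_sum_Icc ha]
  · simp [hf a ha, Icc_eq_empty_of_lt ha, Icc_eq_empty_of_lt (ha.trans (Nat.lt_succ_self a))]

theorem le_sum_Icc_add_two_add_one (hsupp : ∀ i, N < i → p i = 0) (hlast : p N ≤ 1)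
    {a : ℕ} (hfib : ∀ j, a ≤ j → j < N → p j ≤ p (j + 1) + p (j + 2)) {j : ℕ}
    (haj : a ≤ j) (hjN : j ≤ N) : p j ≤ ∑ i ∈ Icc (j + 2) N, p i + 1 := by
  induction hjN using Nat.decreasingInduction with
  | self => omega
  | of_succ j hj ih =>
    have hnext : p (j + 1) ≤ ∑ i ∈ Icc (j + 2 + 1) N, p i + 1 := ih (by omega)
    rw [sum_Icc_eq_add_sum_Icc_add_one hsupp (j + 2)]
    have hstep := hfib j haj hj
    omega

theorem sum_Icc_sq_le_mul (hsupp : ∀ i, N < i → p i = 0) (hlast : p N ≤ 1) {a : ℕ}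
    (hanti : ∀ j, a ≤ j → j < N → p (j + 1) ≤ p j)
    (hfib : ∀ j, a ≤ j → j < N → p j ≤ p (j + 1) + p (j + 2)) {j : ℕ}
    (haj : a ≤ j) (hjN : j ≤ N) :
    ∑ i ∈ Icc j N, p i ^ 2 ≤ p j * (∑ i ∈ Icc (j + 1) N, p i + 1) := by
  induction hjN using Nat.decreasingInduction with
  | self =>
    rw [Icc_self, sum_singleton, Icc_eq_empty_of_lt (Nat.lt_succ_self N), sum_empty]
    nlinarith
  | of_succ j hj ih =>
    have hle := le_sum_Icc_add_two_add_one hsupp hlast hfib haj hj.le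
    have hmono := hanti j haj hj
    have hrest := ih (by omega)
    rw [sum_Icc_eq_add_sum_Icc_add_one (fun i hi => by simp [hsupp i hi]) j,
      sum_Icc_eq_add_sum_Icc_add_one hsupp (j + 1)]
    nlinarith

end TailSums

theorem proposition_5_2_general (N k : ℕ) (E : ℕ → ℕ → Bool)
    (hk2 : 2 ≤ k) (hkN : k ≤ N)
    (hInt : ∀ i j l, E i j = true → j < l → l < i → E i l = true)
    (hOut : ∀ i, 2 ≤ i → i ≤ N →
      ((Finset.range i).filter (fun j => E i j = true)).card ≤ 2 ∧ E i (i - 1) = true)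
    (hTo1 : ∀ i, E i 1 = true ↔ (2 ≤ i ∧ i ≤ k)) :
    (∑ i ∈ Finset.Icc 2 N, (pathCount E N i) ^ 2) ≤
      (∑ i ∈ Finset.Icc 2 k, pathCount E N i) *
        ((∑ i ∈ Finset.Icc (k + 1) N, pathCount E N i) + 1) := by
  have hdeg : ∀ i j, 2 ≤ i → i ≤ N → E i j = true → i ≤ j + 2 := fun i j hi hiN hE =>
    le_add_of_card_filter_le hE (fun l => hInt i j l hE) (hOut i hi hiN).1
  have hk3 : k ≤ 3 := hdeg k 1 hk2 hkN ((hTo1 k).2 ⟨hk2, le_rfl⟩)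
  have hsupp : ∀ i, N < i → pathCount E N i = 0 := fun i => pathCount_eq_zero_of_lt E
  have hlast : pathCount E N N ≤ 1 := (pathCount_self E N).le
  have hanti : ∀ j, 2 ≤ j → j < N → pathCount E N (j + 1) ≤ pathCount E N j :=
    fun j hj hjN => pathCount_succ_le (hOut (j + 1) (by omega) hjN).2 hjN
  have hfib : ∀ j, 2 ≤ j → j < N →
      pathCount E N j ≤ pathCount E N (j + 1) + pathCount E N (j + 2) := fun j hj hjN =>
    pathCount_le_add hjN fun i hji hiN => hdeg i j (by omega) hiN
  have hsq := sum_Icc_sq_le_mul hsupp hlast hanti hfib le_rfl (hk2.trans hkN)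
  interval_cases k
  · simpa using hsq
  · have hle := le_sum_Icc_add_two_add_one hsupp hlast hfib le_rfl (hk2.trans hkN)
    rw [sum_Icc_eq_add_sum_Icc_add_one hsupp 3] at hsq
    rw [show Icc 2 3 = {2, 3} by rfl, sum_pair (by norm_num)]
    nlinarith [Nat.mul_le_mul_right (pathCount E N 3) hle]

/-- Proposition 5.2: for a resolution graph `Γ` on vertices `1,…,N` (edges from
larger to smaller, interval property, at most two outgoing arrows from each
vertex one of which goes to the immediate predecessor), if the vertices sending
an arrow to vertex `1` are exactly `2,…,k`, then
`(p_2+⋯+p_k)·(p_{k+1}+⋯+p_N+1) ≥ p_2²+⋯+p_N²`, where `p_i` is the number of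
directed paths from `N` to `i`. -/
theorem proposition_5_2 (N k : ℕ) (E : ℕ → ℕ → Bool)
    (hN : 2 ≤ N) (hk2 : 2 ≤ k) (hkN : k ≤ N)
    (hE : ∀ i j, E i j = true → 1 ≤ j ∧ j < i ∧ i ≤ N)
    (hInt : ∀ i j l, E i j = true → j < l → l < i → E i l = true)
    (hOut : ∀ i, 2 ≤ i → i ≤ N →
      ((Finset.range i).filter (fun j => E i j = true)).card ≤ 2 ∧ E i (i - 1) = true)
    (hTo1 : ∀ i, E i 1 = true ↔ (2 ≤ i ∧ i ≤ k)) :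
    (∑ i ∈ Finset.Icc 2 N, (pathCount E N i) ^ 2) ≤
      (∑ i ∈ Finset.Icc 2 k, pathCount E N i) *
        ((∑ i ∈ Finset.Icc (k + 1) N, pathCount E N i) + 1) :=
  proposition_5_2_general N k E hk2 hkN hInt hOut hTo1
end

section
/- Let Q(m) be the space of quadratic forms in m variables over ℂ, and for integers e ≥ 1 and a ≥ 0 let X_{e,a} ⊆ Q(m)^e be the set of tuples (h_1,…,h_e) with rk(h_1,…,h_e) ≤ a, where rk of a tuple is the minimal rank of a nonzero linear combination. Then codim(X_{e,a} ⊆ Q(m)^e) ≥ codim(R_{≤a} ⊆ Q(m)) − e + 1 = (m−a)(m−a−1)/2 − e + 1. -/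
/-!
A tuple in `X_{e,a}` has a combination `∑ cₛ hₛ` of rank at most `a` with some `c_t = 1`, so
`h_t = g - ∑_{s ≠ t} c_s h_s` for a symmetric `g` of rank at most `a`. If the rows in `S` span
the row space of `g` (so `|S| ≤ a`), then `g = Kᵀ g[S,S] K` with `K` the identity on the columns
in `S`. Hence `X_{e,a}` lies in finitely many polynomial images of affine spaces of dimension
`(e-1) + |S|(|S|+1)/2 + |S|(m-|S|) + (e-1)·m(m+1)/2 ≤ e·m(m+1)/2 + e - 1 - (m-a)(m-a-1)/2`.

The polynomials vanishing on these images form an ideal whose quotient has Krull dimension at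
most the number `n` of parameters: any `n + 1` polynomials satisfy a nonzero relation modulo it
(the transcendence degree of a polynomial ring in `n` variables is `n`), whereas, following
Coquand–Lombardi, no nonzero relation among `xᵢ ∈ qᵢ₊₁ \ qᵢ` can hold modulo `q₀` along a chain of
primes `q₀ < ⋯ < qₙ₊₁`.
-/

open MvPolynomial Matrix

namespace MvPolynomial

variable {F R : Type*} [Field F] [CommRing R] [Algebra F R]

theorem aeval_eq_aevalTower_finSuccEquiv {k : ℕ} (x : Fin (k + 1) → R)
    (Q : MvPolynomial (Fin (k + 1)) F) :
    aeval x Q = Polynomial.aevalTower (aeval (Fin.tail x)) (x 0) (finSuccEquiv F k Q) := by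
  have : aeval x =
      (Polynomial.aevalTower (aeval (Fin.tail x)) (x 0)).comp (finSuccEquiv F k).toAlgHom := by
    refine algHom_ext fun i => Fin.cases ?_ (fun j => ?_) i
    · simp [finSuccEquiv_X_zero]
    · simp [finSuccEquiv_X_succ, Fin.tail]
  exact DFunLike.congr_fun this Q

theorem exists_aeval_eq_pow_mul_add {k : ℕ} (x : Fin (k + 1) → R)
    {Q : MvPolynomial (Fin (k + 1)) F} (hQ : Q ≠ 0) :
    ∃ (d : ℕ) (r : R) (Q₀ : MvPolynomial (Fin k) F),
      Q₀ ≠ 0 ∧ aeval x Q = x 0 ^ d * (x 0 * r + aeval (Fin.tail x) Q₀) := by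
  obtain ⟨P, hP, hXP⟩ := (finSuccEquiv F k Q).exists_eq_pow_rootMultiplicity_mul_and_not_dvd
    ((finSuccEquiv F k).map_ne_zero_iff.2 hQ) 0
  generalize Polynomial.rootMultiplicity 0 (finSuccEquiv F k Q) = d at hP
  simp only [map_zero, sub_zero, Polynomial.X_dvd_iff] at hXP hP
  refine ⟨d, Polynomial.aevalTower (aeval (Fin.tail x)) (x 0) P.divX, P.coeff 0, hXP, ?_⟩
  rw [aeval_eq_aevalTower_finSuccEquiv, hP, map_mul, map_pow, Polynomial.aevalTower_X]
  conv_lhs => rw [← P.X_mul_divX_add]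
  simp only [map_add, map_mul, Polynomial.aevalTower_X, Polynomial.aevalTower_C]

theorem aeval_notMem_of_chain {k : ℕ} {q : Fin (k + 1) → Ideal R} (hq : ∀ i, (q i).IsPrime)
    (hmono : Monotone q) {x : Fin k → R} (hxmem : ∀ i, x i ∈ q i.succ)
    (hxnot : ∀ i, x i ∉ q i.castSucc) {Q : MvPolynomial (Fin k) F} (hQ : Q ≠ 0) :
    aeval x Q ∉ q 0 := by
  induction k with
  | zero =>
    have hunit : IsUnit (aeval x Q) := by
      rw [eq_C_of_isEmpty Q, aeval_C]
      exact (IsUnit.mk0 _ fun h => hQ (by rw [eq_C_of_isEmpty Q, h, C_0])).map _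
    exact fun h => (hq 0).ne_top (Ideal.eq_top_of_isUnit_mem _ h hunit)
  | succ k ih =>
    obtain ⟨d, r, Q₀, hQ₀, hQx⟩ := exists_aeval_eq_pow_mul_add x hQ
    rw [hQx]
    intro h
    have hsum : x 0 * r + aeval (Fin.tail x) Q₀ ∈ q 0 :=
      ((hq 0).mem_or_mem h).resolve_left fun h' => hxnot 0 ((hq 0).mem_of_pow_mem d h')
    have htail : aeval (Fin.tail x) Q₀ ∈ q (Fin.succ 0) :=
      (Ideal.add_mem_iff_right _ (Ideal.mul_mem_right r _ (hxmem 0))).1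
        (hmono (Fin.zero_le _) hsum)
    refine ih (q := q ∘ Fin.succ) (fun i => hq _) (hmono.comp Fin.strictMono_succ.monotone)
      (fun i => hxmem i.succ) (fun i => ?_) hQ₀ htail
    have := hxnot i.succ
    rwa [← Fin.succ_castSucc] at this

end MvPolynomial

theorem ringKrullDim_quotient_le_of_forall_exists_aeval_mem {F R : Type*} [Field F] [CommRing R]
    [Algebra F R] (I : Ideal R) (n : ℕ)
    (h : ∀ x : Fin (n + 1) → R, ∃ Q : MvPolynomial (Fin (n + 1)) F, Q ≠ 0 ∧ aeval x Q ∈ I) :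
    ringKrullDim (R ⧸ I) ≤ n := by
  rw [ringKrullDim_quotient, Order.krullDim]
  refine iSup_le fun l => ?_
  suffices l.length ≤ n by exact_mod_cast this
  by_contra! hlen
  let q : Fin (n + 2) → Ideal R := fun i => (l (Fin.castLE (by omega) i)).1.asIdeal
  have hq : StrictMono q := fun i j hij => l.strictMono ((Fin.castLE_lt_castLE_iff _).2 hij)
  choose x hxmem hxnot using fun i : Fin (n + 1) =>
    SetLike.exists_of_lt (hq (Fin.castSucc_lt_succ (i := i)))
  obtain ⟨Q, hQ, hQI⟩ := h x
  have hIq : I ≤ q 0 := (PrimeSpectrum.mem_zeroLocus _ _).1 (l _).2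
  exact MvPolynomial.aeval_notMem_of_chain (fun i => (l _).1.isPrime) hq.monotone hxmem hxnot hQ
    (hIq hQI)

namespace MvPolynomial

variable {F : Type*} [Field F]

theorem exists_ne_zero_aeval_eq_zero_of_card_lt {ι τ : Type*} [Fintype ι] [Fintype τ]
    (x : ι → MvPolynomial τ F) (hcard : Fintype.card τ < Fintype.card ι) :
    ∃ Q : MvPolynomial ι F, Q ≠ 0 ∧ aeval x Q = 0 := by
  by_contra! H
  have hx : AlgebraicIndependent F x :=
    algebraicIndependent_iff.2 fun Q hQ => by_contra fun h => H Q h hQ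
  have := hx.lift_cardinalMk_le_trdeg
  simp only [Cardinal.mk_fintype, Cardinal.lift_natCast, trdeg_of_isDomain, Nat.cast_le] at this
  omega

theorem ringKrullDim_quotient_iInf_ker_aeval_le {σ J : Type*} [Fintype J] {τ : J → Type*}
    [∀ j, Fintype (τ j)] (g : (j : J) → σ → MvPolynomial (τ j) F) (n : ℕ)
    (hτ : ∀ j, Fintype.card (τ j) ≤ n) :
    ringKrullDim (MvPolynomial σ F ⧸ ⨅ j, RingHom.ker (aeval (R := F) (g j))) ≤ n := by
  refine ringKrullDim_quotient_le_of_forall_exists_aeval_mem (F := F) _ n fun x => ?_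
  choose Q hQ hQx using fun j => exists_ne_zero_aeval_eq_zero_of_card_lt
    (fun i => aeval (g j) (x i)) (by simpa using Nat.lt_succ_of_le (hτ j))
  refine ⟨∏ j, Q j, Finset.prod_ne_zero_iff.2 fun j _ => hQ j, Ideal.mem_iInf.2 fun j => ?_⟩
  refine Ideal.mem_of_dvd _ ?_ (show aeval x (Q j) ∈ RingHom.ker (aeval (R := F) (g j)) from ?_)
  · rw [map_prod]
    exact Finset.dvd_prod_of_mem _ (Finset.mem_univ j)
  · rw [RingHom.mem_ker, comp_aeval_apply, hQx]

theorem eval_eq_zero_of_mem_ker_aeval {σ τ : Type*} {g : σ → MvPolynomial τ F}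
    {p : MvPolynomial σ F} (hp : p ∈ RingHom.ker (aeval (R := F) g)) (ξ : τ → F) :
    eval (fun s => eval ξ (g s)) p = 0 := by
  have h := comp_aeval_apply g (aeval ξ) p
  rw [RingHom.mem_ker.1 hp, map_zero] at h
  simpa [coe_aeval_eq_eval] using h.symm

theorem exists_ideal_ringKrullDim_le_of_subset_iUnion_range {σ J : Type*} [Fintype J]
    {τ : J → Type*} [∀ j, Fintype (τ j)] (g : (j : J) → σ → MvPolynomial (τ j) F) (n : ℕ)
    (hτ : ∀ j, Fintype.card (τ j) ≤ n) (X : Set (σ → F))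
    (hX : X ⊆ ⋃ j, Set.range fun (ξ : τ j → F) s => eval ξ (g j s)) :
    ∃ I : Ideal (MvPolynomial σ F), (∀ φ ∈ X, ∀ p ∈ I, eval φ p = 0) ∧
      ringKrullDim (MvPolynomial σ F ⧸ I) ≤ n := by
  refine ⟨_, fun φ hφ p hp => ?_, ringKrullDim_quotient_iInf_ker_aeval_le g n hτ⟩
  obtain ⟨j, ξ, rfl⟩ := Set.mem_iUnion.1 (hX hφ)
  exact eval_eq_zero_of_mem_ker_aeval (Ideal.mem_iInf.1 hp j) ξ

end MvPolynomial

namespace Matrix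

variable {n m K : Type*} [Field K]

theorem exists_finset_card_le_rank_forall_mem_span [Fintype n] [Fintype m] (M : Matrix n m K) :
    ∃ S : Finset n, S.card ≤ M.rank ∧
      ∀ i, M i ∈ Submodule.span K (Set.range fun u : S => M u) := by
  classical
  obtain ⟨κ, a, ha, hspan, hli⟩ := exists_linearIndependent' K M
  have : Fintype κ := Fintype.ofInjective a ha
  have hrange : (Set.range fun u : Finset.univ.image a => M u) = Set.range (M ∘ a) := by
    ext; simp [Function.comp]
  refine ⟨Finset.univ.image a, ?_, fun i => ?_⟩
  · rw [Finset.card_image_of_injective _ ha, Finset.card_univ, ← finrank_span_eq_card hli, hspan,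
      rank_eq_finrank_span_row]
    rfl
  · rw [hrange, hspan]
    exact Submodule.subset_span (Set.mem_range_self i)

theorem exists_submatrix_eq_one_and_transpose_mul_eq [DecidableEq n] (M : Matrix n m K)
    (S : Finset n) (hS : ∀ i, M i ∈ Submodule.span K (Set.range fun u : S => M u)) :
    ∃ C : Matrix S n K,
      C.submatrix id ((↑) : S → n) = 1 ∧ Cᵀ * M.submatrix ((↑) : S → n) id = M := by
  choose c hc using fun i => (Submodule.mem_span_range_iff_exists_fun K).1 (hS i)
  refine ⟨of fun u i => if h : i ∈ S then (1 : Matrix S S K) u ⟨i, h⟩ else c i u, ?_, ?_⟩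
  · ext u v
    simp
  · ext i j
    rw [mul_apply]
    by_cases h : i ∈ S
    · simp [h, one_apply]
    · simp [h, ← hc i]

theorem transpose_mul_submatrix_mul_eq_of_isSymm {ι R : Type*} [Fintype ι] [CommRing R]
    {M : Matrix n n R} (hM : M.IsSymm) (e : ι → n) {C : Matrix ι n R}
    (hC : Cᵀ * M.submatrix e id = M) :
    Cᵀ * M.submatrix e e * C = M := by
  have hcols : M.submatrix id e * C = M := by
    simpa [transpose_mul, transpose_submatrix, hM.eq] using congrArg transpose hC
  have hrows : M.submatrix e e * C = M.submatrix e id := by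
    simpa [submatrix_mul _ _ e id id Function.bijective_id] using congrArg (submatrix · e id) hcols
  rw [Matrix.mul_assoc, hrows, hC]

end Matrix

section LowRank

variable {F n : Type*} [Field F] [Fintype n] [DecidableEq n]

abbrev LowRankVars (S : Finset n) := Sym2 S ⊕ S × ↥Sᶜ

noncomputable def frameMatrix (S : Finset n) : Matrix S n (MvPolynomial (LowRankVars S) F) :=
  of fun u i => if h : i ∈ S then (1 : Matrix S S _) u ⟨i, h⟩
    else X (Sum.inr (u, ⟨i, Finset.mem_compl.2 h⟩))

noncomputable def coreMatrix (S : Finset n) : Matrix S S (MvPolynomial (LowRankVars S) F) :=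
  of fun u v => X (Sum.inl s(u, v))

noncomputable def lowRankMatrix (S : Finset n) : Matrix n n (MvPolynomial (LowRankVars S) F) :=
  (frameMatrix (F := F) S)ᵀ * coreMatrix (F := F) S * frameMatrix (F := F) S

theorem lowRankMatrix_isSymm (S : Finset n) : (lowRankMatrix (F := F) S).IsSymm := by
  have hcore : (coreMatrix (F := F) S).IsSymm :=
    IsSymm.ext fun u v => by simp [coreMatrix, Sym2.eq_swap]
  simp [IsSymm, lowRankMatrix, transpose_mul, hcore.eq, Matrix.mul_assoc]

theorem exists_map_eval_lowRankMatrix_eq {M : Matrix n n F} (hM : M.IsSymm) (S : Finset n)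
    (hS : ∀ i, M i ∈ Submodule.span F (Set.range fun u : S => M u)) :
    ∃ ξ, (lowRankMatrix S).map (eval ξ) = M := by
  obtain ⟨C, hC1, hC⟩ := exists_submatrix_eq_one_and_transpose_mul_eq M S hS
  let ξ : LowRankVars S → F :=
    Sum.elim (Sym2.lift ⟨fun u v => M u v, fun u v => (hM.apply u v).symm⟩) fun p => C p.1 p.2
  have hframe : (frameMatrix S).map (eval ξ) = C := by
    ext u i
    by_cases h : i ∈ S
    · simpa [frameMatrix, h, one_apply] using (congr_fun₂ hC1 u ⟨i, h⟩).symm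
    · simp [frameMatrix, h, ξ]
  have hcore : (coreMatrix S).map (eval ξ) = M.submatrix (↑) (↑) := by
    ext u v
    simp [coreMatrix, ξ]
  refine ⟨ξ, ?_⟩
  rw [lowRankMatrix, Matrix.map_mul, Matrix.map_mul, transpose_map, hframe, hcore]
  exact transpose_mul_submatrix_mul_eq_of_isSymm hM _ hC

theorem exists_map_eval_lowRankMatrix_eq_of_rank_le {M : Matrix n n F} (hM : M.IsSymm) {a : ℕ}
    (hrank : M.rank ≤ a) :
    ∃ S : Finset n, S.card ≤ a ∧ ∃ ξ, (lowRankMatrix S).map (eval ξ) = M := by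
  obtain ⟨S, hcard, hS⟩ := M.exists_finset_card_le_rank_forall_mem_span
  exact ⟨S, hcard.trans hrank, exists_map_eval_lowRankMatrix_eq hM S hS⟩

noncomputable def lowRankForm (S : Finset n) : Sym2 n → MvPolynomial (LowRankVars S) F :=
  Sym2.lift ⟨fun i j => lowRankMatrix S i j, fun i j => ((lowRankMatrix_isSymm S).apply i j).symm⟩

end LowRank

section Combination

variable {F κ ν : Type*} [Field F] {e : ℕ}

/-- The variables are the coefficients `c_s`, the parameters of `G`, and the forms `h_s` for
`s ≠ t` (indexed through `t.succAbove`); the `t`-th form is `G - ∑_{s ≠ t} c_s h_s`. -/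
noncomputable def combinationParam (G : κ → MvPolynomial ν F) (t : Fin (e + 1)) :
    Fin (e + 1) × κ → MvPolynomial (Fin e ⊕ ν ⊕ Fin e × κ) F := fun p =>
  Fin.insertNth (α := fun _ => κ → MvPolynomial _ F) t
    (fun k => rename (Sum.inr ∘ Sum.inl) (G k) - ∑ s, X (Sum.inl s) * X (Sum.inr (Sum.inr (s, k))))
    (fun s k => X (Sum.inr (Sum.inr (s, k)))) p.1 p.2

theorem exists_eval_combinationParam_eq (G : κ → MvPolynomial ν F) (t : Fin (e + 1))
    (φ : Fin (e + 1) × κ → F) {c : Fin (e + 1) → F} (hct : c t = 1) {ξ : ν → F}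
    (h : ∀ k, ∑ s, c s * φ (s, k) = eval ξ (G k)) :
    ∃ ζ, φ = fun p => eval ζ (combinationParam G t p) := by
  refine ⟨Sum.elim (c ∘ t.succAbove) (Sum.elim ξ fun q => φ (t.succAbove q.1, q.2)),
    funext fun ⟨s, k⟩ => ?_⟩
  induction s using Fin.succAboveCases t with
  | x =>
    have hk := h k
    rw [Fin.sum_univ_succAbove _ t, hct, one_mul] at hk
    simp only [combinationParam, Fin.insertNth_apply_same, map_sub, map_sum, map_mul, eval_X,
      eval_rename, Sum.elim_inl, Sum.elim_inr]
    exact eq_sub_iff_add_eq.2 hk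
  | p s =>
    simp [combinationParam]

end Combination

theorem Nat.choose_two_add_mul_add_choose_two (s k : ℕ) :
    (s + 1).choose 2 + s * k + (k + 1).choose 2 = (s + k + 1).choose 2 := by
  induction k with
  | zero => simp
  | succ k ih =>
    rw [Nat.choose_succ_succ' (k + 1), ← add_assoc s, Nat.choose_succ_succ' (s + k + 1), ← ih]
    simp only [Nat.choose_one_right]
    ring

theorem Nat.choose_two_add_mul_add_choose_two_le {s a m : ℕ} (hsa : s ≤ a) (hsm : s ≤ m) :
    (s + 1).choose 2 + s * (m - s) + (m - a).choose 2 ≤ (m + 1).choose 2 := by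
  obtain ⟨k, rfl⟩ := Nat.exists_eq_add_of_le hsm
  rw [Nat.add_sub_cancel_left, ← choose_two_add_mul_add_choose_two]
  gcongr
  omega

def tupleRankLocus (F n : Type*) [Field F] [Fintype n] (e a : ℕ) :
    Set (Fin e × Sym2 n → F) :=
  {φ | ∃ c : Fin e → F, c ≠ 0 ∧ (Matrix.of fun i j : n => ∑ t, c t * φ (t, s(i, j))).rank ≤ a}

section Locus

variable {F n : Type*} [Field F] [Fintype n] [DecidableEq n] {e a : ℕ}

theorem tupleRankLocus_subset_iUnion_range :
    tupleRankLocus F n (e + 1) a ⊆ ⋃ j : Fin (e + 1) × {S : Finset n // S.card ≤ a},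
      Set.range fun ζ p => eval ζ (combinationParam (lowRankForm j.2.1) j.1 p) := by
  rintro φ ⟨c, hc, hrank⟩
  obtain ⟨t, ht⟩ : ∃ t, c t ≠ 0 := Function.ne_iff.1 hc
  set M := Matrix.of fun i j : n => ∑ t, c t * φ (t, s(i, j))
  have hM : ((c t)⁻¹ • M).IsSymm :=
    (IsSymm.ext fun i j => by simp [M, Sym2.eq_swap]).smul _
  have hrank' : ((c t)⁻¹ • M).rank ≤ a := by
    rwa [rank_smul_of_mem_nonZeroDivisors _ (mem_nonZeroDivisors_of_ne_zero (inv_ne_zero ht))]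
  obtain ⟨S, hS, ξ, hξ⟩ := exists_map_eval_lowRankMatrix_eq_of_rank_le hM hrank'
  obtain ⟨ζ, rfl⟩ := exists_eval_combinationParam_eq (lowRankForm S) t φ (c := (c t)⁻¹ • c)
    (by simp [inv_mul_cancel₀ ht]) (ξ := ξ) fun k => by
      induction k using Sym2.ind with
      | _ i j =>
        simpa [lowRankForm, M, Finset.mul_sum, mul_assoc] using (congr_fun₂ hξ i j).symm
  exact Set.mem_iUnion.2 ⟨(t, ⟨S, hS⟩), ζ, rfl⟩

theorem card_vars_combinationParam_lowRankForm_le {S : Finset n} (hS : S.card ≤ a) :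
    Fintype.card (Fin e ⊕ LowRankVars S ⊕ Fin e × Sym2 n) ≤
      e + ((Fintype.card n + 1).choose 2 - (Fintype.card n - a).choose 2) +
        e * (Fintype.card n + 1).choose 2 := by
  have := Nat.choose_two_add_mul_add_choose_two_le hS S.card_le_univ
  simp only [Fintype.card_sum, Fintype.card_fin, Sym2.card, Fintype.card_coe, Fintype.card_prod,
    Finset.mem_compl, Fintype.card_subtype_compl]
  omega

end Locus

/-- Lemma 2.1: let `Q(m)` be the space of quadratic forms in `m` variables over
`ℂ` (identified with symmetric `m × m` matrices, coordinates indexed by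
`Sym2 (Fin m)`), and let `X_{e,a} ⊆ Q(m)^e` be the set of tuples `(h_1,…,h_e)`
whose tuple rank (the minimal rank of a nonzero linear combination) is at most
`a`. Then `X_{e,a}` is contained in a Zariski closed subset of codimension at
least `(m−a)(m−a−1)/2 − e + 1`: there is an ideal `I` of polynomials vanishing
on `X_{e,a}` whose quotient ring has Krull dimension at most
`e·m(m+1)/2 − ((m−a)(m−a−1)/2 − e + 1)`, i.e.
`dim + (m−a)(m−a−1)/2 ≤ e·m(m+1)/2 + e − 1`. -/
theorem tuple_rank_le_locus_codim (m e a : ℕ) (he : 1 ≤ e) :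
    ∃ I : Ideal (MvPolynomial (Fin e × Sym2 (Fin m)) ℂ),
      (∀ φ : Fin e × Sym2 (Fin m) → ℂ,
        (∃ c : Fin e → ℂ, c ≠ 0 ∧
          (Matrix.of fun i j : Fin m =>
            ∑ t : Fin e, c t * φ (t, Sym2.mk i j)).rank ≤ a) →
        ∀ p ∈ I, MvPolynomial.eval φ p = 0) ∧
      ringKrullDim (MvPolynomial (Fin e × Sym2 (Fin m)) ℂ ⧸ I) +
          (((m - a) * (m - a - 1) / 2 : ℕ) : WithBot ℕ∞) ≤
        ((e * (m * (m + 1) / 2) + e - 1 : ℕ) : WithBot ℕ∞) := by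
  obtain ⟨e, rfl⟩ : ∃ e', e = e' + 1 := ⟨e - 1, by omega⟩
  obtain ⟨I, hI, hdim⟩ := exists_ideal_ringKrullDim_le_of_subset_iUnion_range _ _
    (fun j => by simpa using card_vars_combinationParam_lowRankForm_le j.2.2)
    (tupleRankLocus ℂ (Fin m) (e + 1) a) tupleRankLocus_subset_iUnion_range
  refine ⟨I, hI, ?_⟩
  have hDN : (m - a).choose 2 ≤ (m + 1).choose 2 := Nat.choose_le_choose 2 (by omega)
  rw [← Nat.choose_two_right, show m * (m + 1) / 2 = (m + 1).choose 2 by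
    rw [Nat.choose_two_right, Nat.add_sub_cancel, mul_comm]]
  generalize (m + 1).choose 2 = N, (m - a).choose 2 = D at hdim hDN
  calc _ ≤ ((e + (N - D) + e * N : ℕ) : WithBot ℕ∞) + D := by gcongr
    _ = _ := by
      norm_cast
      have : (e + 1) * N = e * N + N := by ring
      omega
end

section
/- Suppose real numbers p_0, p_1, …, p_N > 0, multiplicities μ_0, μ_1, …, μ_N ≥ 0, integers δ_1, …, δ_N ≥ 1, an integer L with 1 ≤ L, and an integer k with 1 ≤ k ≤ N satisfy: μ_0 ≤ 2n for a real n > 0, μ_i ≤ n for all i ≥ 1, δ_i ≥ 2 for 1 ≤ i ≤ L, δ_i = 1 for i > L, p_0 = p_1 + ⋯ + p_k, and the log Noether–Fano inequality p_0μ_0 + Σ_{i=1}^N p_iμ_i > (p_0 + Σ_{i=1}^N p_iδ_i + 1)·n. Then k ≥ L + 1. -/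
/-! If `k ≤ L`, every index `i ≤ k` has `δ_i ≥ 2`, so `Σ p_i δ_i ≥ Σ p_i + p_0`. Bounding
`μ_0 ≤ 2n` and `μ_i ≤ n` then gives `p_0 μ_0 + Σ p_i μ_i ≤ (p_0 + Σ p_i δ_i) n`, which
contradicts the log Noether–Fano inequality by the margin `n > 0`. -/

open Finset

theorem Finset.sum_add_sum_le_sum_mul {ι : Type*} {s t : Finset ι} (hts : t ⊆ s)
    {p d : ι → ℝ} (hp : ∀ i ∈ s, 0 ≤ p i) (hd₁ : ∀ i ∈ s, 1 ≤ d i)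
    (hd₂ : ∀ i ∈ t, 2 ≤ d i) :
    ∑ i ∈ s, p i + ∑ i ∈ t, p i ≤ ∑ i ∈ s, p i * d i := by
  have hexcess : ∑ i ∈ t, p i ≤ ∑ i ∈ s, p i * (d i - 1) :=
    calc ∑ i ∈ t, p i ≤ ∑ i ∈ t, p i * (d i - 1) :=
          sum_le_sum fun i hi => by nlinarith [hp i (hts hi), hd₂ i hi]
      _ ≤ ∑ i ∈ s, p i * (d i - 1) :=
          sum_le_sum_of_subset_of_nonneg hts fun i hi _ =>
            mul_nonneg (hp i hi) (sub_nonneg.mpr (hd₁ i hi))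
  simp only [mul_sub, mul_one, sum_sub_distrib] at hexcess
  linarith

theorem lemma_5_2_general (N L k : ℕ) (n : ℝ) (p μ : ℕ → ℝ) (δ : ℕ → ℕ)
    (hn : 0 < n)
    (hkN : k ≤ N)
    (hp : ∀ i, i ≤ N → 0 < p i)
    (hμ0 : μ 0 ≤ 2 * n)
    (hμ : ∀ i, 1 ≤ i → i ≤ N → μ i ≤ n)
    (hδ1 : ∀ i, 1 ≤ i → i ≤ N → 1 ≤ δ i)
    (hδL : ∀ i, 1 ≤ i → i ≤ L → 2 ≤ δ i)
    (hp0 : p 0 = ∑ i ∈ Finset.Icc 1 k, p i)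
    (hNF : p 0 * μ 0 + ∑ i ∈ Finset.Icc 1 N, p i * μ i >
      (p 0 + (∑ i ∈ Finset.Icc 1 N, p i * (δ i : ℝ)) + 1) * n) :
    L + 1 ≤ k := by
  by_contra! hkL
  have hμsum : ∑ i ∈ Icc 1 N, p i * μ i ≤ (∑ i ∈ Icc 1 N, p i) * n := by
    rw [sum_mul]
    refine sum_le_sum fun i hi => ?_
    obtain ⟨hi₁, hiN⟩ := mem_Icc.mp hi
    exact mul_le_mul_of_nonneg_left (hμ i hi₁ hiN) (hp i hiN).le
  have hδsum : ∑ i ∈ Icc 1 N, p i + p 0 ≤ ∑ i ∈ Icc 1 N, p i * (δ i : ℝ) := by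
    rw [hp0]
    refine sum_add_sum_le_sum_mul (Icc_subset_Icc_right hkN)
      (fun i hi => (hp i (mem_Icc.mp hi).2).le) (fun i hi => ?_) (fun i hi => ?_)
    · exact_mod_cast hδ1 i (mem_Icc.mp hi).1 (mem_Icc.mp hi).2
    · exact_mod_cast hδL i (mem_Icc.mp hi).1 ((mem_Icc.mp hi).2.trans (Nat.lt_succ_iff.mp hkL))
  have hμ0' : p 0 * μ 0 ≤ p 0 * (2 * n) := mul_le_mul_of_nonneg_left hμ0 (hp 0 N.zero_le).le
  have hδsum_n := mul_le_mul_of_nonneg_right hδsum hn.le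
  linarith

/-- Lemma 5.2: in the resolution of a non log canonical singularity, with path
counts `p_0,…,p_N > 0`, multiplicities `μ_0,…,μ_N ≥ 0` satisfying `μ_0 ≤ 2n`
and `μ_i ≤ n` for `i ≥ 1`, discrepancy-type integers `δ_i ≥ 2` for `1 ≤ i ≤ L`
and `δ_i = 1` for `i > L`, `p_0 = p_1 + ⋯ + p_k`, and the log Noether–Fano
inequality `p_0 μ_0 + Σ_{i=1}^N p_i μ_i > (p_0 + Σ_{i=1}^N p_i δ_i + 1)·n`,
one has `k ≥ L + 1`. -/
theorem lemma_5_2 (N L k : ℕ) (n : ℝ) (p μ : ℕ → ℝ) (δ : ℕ → ℕ)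
    (hn : 0 < n)
    (hL1 : 1 ≤ L) (hLN : L ≤ N) (hk1 : 1 ≤ k) (hkN : k ≤ N)
    (hp : ∀ i, i ≤ N → 0 < p i)
    (hμnonneg : ∀ i, i ≤ N → 0 ≤ μ i)
    (hμ0 : μ 0 ≤ 2 * n)
    (hμ : ∀ i, 1 ≤ i → i ≤ N → μ i ≤ n)
    (hδ1 : ∀ i, 1 ≤ i → i ≤ N → 1 ≤ δ i)
    (hδL : ∀ i, 1 ≤ i → i ≤ L → 2 ≤ δ i)
    (hδ : ∀ i, L < i → i ≤ N → δ i = 1)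
    (hp0 : p 0 = ∑ i ∈ Finset.Icc 1 k, p i)
    (hNF : p 0 * μ 0 + ∑ i ∈ Finset.Icc 1 N, p i * μ i >
      (p 0 + (∑ i ∈ Finset.Icc 1 N, p i * (δ i : ℝ)) + 1) * n) :
    L + 1 ≤ k :=
  lemma_5_2_general N L k n p μ δ hn hkN hp hμ0 hμ hδ1 hδL hp0 hNF
end
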